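/- arXiv:1307.1501 — 5 statements merged into one kernel-verified Lean document; each statement's English description precedes it below -/
import Mathlib

section
/- If φ_n : E → ℝ is a uniformly bounded sequence of continuous functions on a complete locally compact separable metric space E converging uniformly on compact subsets of E to a function φ, and μ_n is a sequence of probability measures on E converging weakly to a probability measure μ, then φ is continuous and bounded on E and ∫ φ_n dμ_n → ∫ φ dμ. -/
/-!
Since `φn → φ` locally uniformly, `φ` is continuous and inherits the bound `C`. The limit `μ` is
inner regular on the σ-compact space `E`, so some compact `K` has `μ Kᶜ < ε`; a compactly
supported Urysohn function `g` equal to `1` on `K` then gives `μn n Lᶜ < ε` eventually, where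
`L = tsupport g`. On `L` the difference `φn n - φ` is uniformly small and off `L` it is bounded
by `2C`, so `∫ (φn n - φ) dμn n → 0`, while `∫ φ dμn n → ∫ φ dμ` by weak convergence.
-/

open MeasureTheory Filter Topology

section

variable {E : Type*} [MeasurableSpace E]

lemma measureReal_le_integral_of_eqOn_one {ν : Measure E} [IsFiniteMeasure ν] {K : Set E}
    (hK : MeasurableSet K) {g : E → ℝ} (hg : Integrable g ν) (hg1 : Set.EqOn g 1 K)
    (hg0 : 0 ≤ g) : ν.real K ≤ ∫ x, g x ∂ν := by
  rw [← integral_indicator_one hK]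
  refine integral_mono ((integrable_const 1).indicator hK) hg fun x => ?_
  by_cases hx : x ∈ K
  · simp [hx, hg1 hx]
  · simpa [hx] using hg0 x

variable [TopologicalSpace E] [OpensMeasurableSpace E]

lemma integral_le_measureReal_tsupport {ν : Measure E} [IsFiniteMeasure ν] {g : E → ℝ}
    (hg : Integrable g ν) (hg1 : g ≤ 1) : ∫ x, g x ∂ν ≤ ν.real (tsupport g) := by
  rw [← integral_indicator_one (isClosed_tsupport g).measurableSet]
  refine integral_mono hg ((integrable_const 1).indicator
    (isClosed_tsupport g).measurableSet) fun x => ?_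
  by_cases hx : x ∈ tsupport g
  · simpa [hx] using hg1 x
  · simp [hx, image_eq_zero_of_notMem_tsupport hx]

lemma Continuous.integrable_of_abs_le {ν : Measure E} [IsFiniteMeasure ν] {f : E → ℝ}
    (hf : Continuous f) {C : ℝ} (hC : ∀ x, |f x| ≤ C) : Integrable f ν :=
  .of_bound hf.aestronglyMeasurable C (ae_of_all _ hC)

theorem exists_isCompact_eventually_measureReal_compl_lt [T2Space E] [LocallyCompactSpace E]
    {ι : Type*} {l : Filter ι} {μs : ι → Measure E} {μ : Measure E}
    [∀ i, IsProbabilityMeasure (μs i)] [IsProbabilityMeasure μ] [μ.InnerRegularCompactLTTop]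
    (hvague : ∀ f : E → ℝ, Continuous f → HasCompactSupport f →
      Tendsto (fun i => ∫ x, f x ∂μs i) l (𝓝 (∫ x, f x ∂μ)))
    {ε : ℝ} (hε : 0 < ε) : ∃ L, IsCompact L ∧ ∀ᶠ i in l, (μs i).real Lᶜ < ε := by
  obtain ⟨K, -, hK, hμK⟩ := MeasurableSet.univ.exists_isCompact_sdiff_lt (measure_ne_top μ _)
    (ENNReal.ofReal_pos.2 hε).ne'
  obtain ⟨g, hg1, -, hgc, hg01⟩ :=
    exists_continuous_one_zero_of_isCompact hK isClosed_empty (Set.disjoint_empty K)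
  have hgint (ν : Measure E) [IsFiniteMeasure ν] : Integrable g ν :=
    g.continuous.integrable_of_hasCompactSupport hgc
  have hμg : 1 - ε < ∫ x, g x ∂μ := by
    have hKc : μ.real Kᶜ < ε := by
      rw [Set.compl_eq_univ_sdiff]
      exact ENNReal.toReal_lt_of_lt_ofReal hμK
    have := measureReal_le_integral_of_eqOn_one hK.measurableSet (hgint μ) hg1
      fun x => (hg01 x).1
    linarith [probReal_compl_eq_one_sub (μ := μ) hK.measurableSet]
  refine ⟨tsupport g, hgc, ?_⟩
  filter_upwards [(hvague g g.continuous hgc).eventually (eventually_gt_nhds hμg)] with i hi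
  have := integral_le_measureReal_tsupport (hgint (μs i)) fun x => (hg01 x).2
  linarith [probReal_compl_eq_one_sub (μ := μs i) (isClosed_tsupport g).measurableSet]

theorem tendsto_integral_of_tendstoUniformlyOn_zero [T2Space E] {ι : Type*} {l : Filter ι}
    {μs : ι → Measure E} [∀ i, IsProbabilityMeasure (μs i)]
    (htight : ∀ ε > 0, ∃ L, IsCompact L ∧ ∀ᶠ i in l, (μs i).real Lᶜ < ε)
    {ψ : ι → E → ℝ} {B : ℝ} (hB : ∀ i x, |ψ i x| ≤ B)
    (hψ : ∀ K, IsCompact K → TendstoUniformlyOn ψ 0 l K) :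
    Tendsto (fun i => ∫ x, ψ i x ∂μs i) l (𝓝 0) := by
  rw [Metric.tendsto_nhds]
  intro ε hε
  set δ := ε / (2 * (|B| + 1))
  have hδ : 0 < δ := by positivity
  obtain ⟨L, hL, hLc⟩ := htight δ hδ
  filter_upwards [hLc, Metric.tendstoUniformlyOn_iff.1 (hψ L hL) δ hδ] with i hi hunif
  have hmeas : MeasurableSet Lᶜ := hL.isClosed.measurableSet.compl
  have hpt : ∀ x, ‖ψ i x‖ ≤ δ + Lᶜ.indicator (fun _ => B) x := by
    intro x
    by_cases hx : x ∈ L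
    · simpa [hx, Real.dist_eq, abs_sub_comm] using (hunif x hx).le
    · simpa [hx] using (hB i x).trans (le_add_of_nonneg_left hδ.le)
  calc dist (∫ x, ψ i x ∂μs i) 0 ≤ ∫ x, (δ + Lᶜ.indicator (fun _ => B) x) ∂μs i := by
        rw [dist_zero_right]
        exact norm_integral_le_of_norm_le ((integrable_const δ).add
          ((integrable_const B).indicator hmeas)) (Eventually.of_forall hpt)
    _ = δ + (μs i).real Lᶜ * B := by
        rw [integral_add (integrable_const δ) ((integrable_const B).indicator hmeas),
          integral_indicator_const B hmeas]
        simp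
    _ ≤ δ + δ * |B| := by
        have hBδ : (μs i).real Lᶜ * B ≤ δ * |B| :=
          (mul_le_mul_of_nonneg_left (le_abs_self B) measureReal_nonneg).trans
            (mul_le_mul_of_nonneg_right hi.le (abs_nonneg B))
        linarith
    _ < ε := by
        have : δ * (|B| + 1) = ε / 2 := by simp only [δ]; field_simp
        linarith

end

theorem stmt_0_general {E : Type*} [MetricSpace E] [LocallyCompactSpace E]
    [TopologicalSpace.SeparableSpace E] [MeasurableSpace E] [BorelSpace E]
    (μn : ℕ → Measure E) (μ : Measure E)
    [∀ n, IsProbabilityMeasure (μn n)] [IsProbabilityMeasure μ]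
    (hweak : ∀ f : E → ℝ, Continuous f → (∃ M : ℝ, ∀ x, |f x| ≤ M) →
      Tendsto (fun n => ∫ x, f x ∂ μn n) atTop (𝓝 (∫ x, f x ∂ μ)))
    (φn : ℕ → E → ℝ) (φ : E → ℝ)
    (hcont : ∀ n, Continuous (φn n))
    (C : ℝ) (hbd : ∀ n x, |φn n x| ≤ C)
    (hconv : ∀ K : Set E, IsCompact K → TendstoUniformlyOn φn φ atTop K) :
    Continuous φ ∧ (∀ x, |φ x| ≤ C) ∧
      Tendsto (fun n => ∫ x, φn n x ∂ μn n) atTop (𝓝 (∫ x, φ x ∂ μ)) := by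
  have hφcont : Continuous φ :=
    (tendstoLocallyUniformly_iff_forall_isCompact.2 hconv).continuous
      (Eventually.of_forall hcont).frequently
  have hφbd : ∀ x, |φ x| ≤ C := fun x =>
    le_of_tendsto ((hconv {x} isCompact_singleton).tendsto_at rfl).abs
      (Eventually.of_forall fun n => hbd n x)
  refine ⟨hφcont, hφbd, ?_⟩
  have htight : ∀ ε > 0, ∃ L, IsCompact L ∧ ∀ᶠ n in atTop, (μn n).real Lᶜ < ε :=
    fun ε => exists_isCompact_eventually_measureReal_compl_lt fun f hf hfc =>
      hweak f hf (hf.bounded_above_of_compact_support hfc)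
  have hdiff : Tendsto (fun n => ∫ x, (φn n x - φ x) ∂μn n) atTop (𝓝 0) :=
    tendsto_integral_of_tendstoUniformlyOn_zero htight (B := C + C)
      (fun n x => (abs_sub _ _).trans (add_le_add (hbd n x) (hφbd x)))
      fun K hK => by
        simpa [Metric.tendstoUniformlyOn_iff, Real.dist_eq, abs_sub_comm] using hconv K hK
  refine (zero_add (∫ x, φ x ∂μ) ▸ hdiff.add (hweak φ hφcont ⟨C, hφbd⟩)).congr fun n => ?_
  rw [integral_sub ((hcont n).integrable_of_abs_le (hbd n)) (hφcont.integrable_of_abs_le hφbd)]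
  simp

/-- Second continuous mapping theorem, part (i): if `φn` are uniformly bounded continuous
functions converging uniformly on compact sets to `φ`, and `μn` are probability measures
converging weakly to `μ`, then `φ` is continuous and bounded and `∫ φn dμn → ∫ φ dμ`. -/
theorem stmt_0 {E : Type*} [MetricSpace E] [CompleteSpace E] [LocallyCompactSpace E]
    [TopologicalSpace.SeparableSpace E] [MeasurableSpace E] [BorelSpace E]
    (μn : ℕ → Measure E) (μ : Measure E)
    [∀ n, IsProbabilityMeasure (μn n)] [IsProbabilityMeasure μ]
    (hweak : ∀ f : E → ℝ, Continuous f → (∃ M : ℝ, ∀ x, |f x| ≤ M) →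
      Tendsto (fun n => ∫ x, f x ∂ μn n) atTop (𝓝 (∫ x, f x ∂ μ)))
    (φn : ℕ → E → ℝ) (φ : E → ℝ)
    (hcont : ∀ n, Continuous (φn n))
    (C : ℝ) (hbd : ∀ n x, |φn n x| ≤ C)
    (hconv : ∀ K : Set E, IsCompact K → TendstoUniformlyOn φn φ atTop K) :
    Continuous φ ∧ (∀ x, |φ x| ≤ C) ∧
      Tendsto (fun n => ∫ x, φn n x ∂ μn n) atTop (𝓝 (∫ x, φ x ∂ μ)) :=
  stmt_0_general μn μ hweak φn φ hcont C hbd hconv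
end

section
/- Let ν be a measure on (0,∞] × [−∞,∞]^h satisfying the homogeneity property ν((t y₀, ∞] × ∏_{i=1}^h [−∞, t^{κ_i} y_i]) = t^{−α} ν((y₀,∞] × ∏_{i=1}^h [−∞, y_i]) for all t > 0, all y₀ > 0 and y_i ∈ ℝ, where α > 0 and κ_i ∈ ℝ. Define G_h on ℝ^h by G_h(y₁,…,y_h) = ν restricted via the change of variables u_i ↦ u₀^{κ_i} u_i, integrated over u₀ ∈ [1,∞). Then for all y₀ ≥ 1, the measure of the set {(u₀,…,u_h) : u₀ > y₀, u_i ≤ u₀^{κ_i} y_i for all i} equals y₀^{−α} G_h(y₁,…,y_h). -/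
/-!
On boxes `(a, ∞) × ∏ᵢ (-∞, cᵢ]` inside `{p₀ > 1}`, the homogeneity hypothesis says exactly
that the push-forward of `ν` under `rescale κ t : p ↦ (p₀ / t, (pᵢ / t ^ κᵢ)ᵢ)` agrees with
`t ^ (-α) • ν`. These boxes form a π-system generating the Borel σ-algebra, so the two measures
agree on all of `{p₀ > 1}`, in particular on `{p₀ > 1, pᵢ ≤ p₀ ^ κᵢ yᵢ}`, whose preimage under
`rescale κ t` is `{p₀ > t, pᵢ ≤ p₀ ^ κᵢ yᵢ}`. On `{p₀ > 1}` itself this gives the tail law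
`ν {p₀ > t} = t ^ (-α) ν {p₀ > 1}`, continuous in `t`, so `ν` puts no mass on `{p₀ = 1}`.
-/

open MeasureTheory Set Filter Topology
open scoped ENNReal

section Boxes

variable {ι : Type*}

lemma isCountablySpanning_range_Ioi : IsCountablySpanning (range (Ioi : ℝ → Set ℝ)) :=
  ⟨fun n : ℕ => Ioi (-n), fun _ => mem_range_self _,
    iUnion_eq_univ_iff.2 fun x => (exists_nat_gt (-x)).imp fun _ hn => neg_lt.1 hn⟩

lemma isCountablySpanning_range_Iic : IsCountablySpanning (range (Iic : ℝ → Set ℝ)) :=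
  ⟨fun n : ℕ => Iic n, fun _ => mem_range_self _,
    iUnion_eq_univ_iff.2 fun x => ⟨⌈x⌉₊, Nat.le_ceil x⟩⟩

lemma isPiSystem_range_Ioi_prod_Iic :
    IsPiSystem (range fun q : ℝ × (ι → ℝ) => Ioi q.1 ×ˢ Iic q.2) := by
  rintro _ ⟨⟨a, c⟩, rfl⟩ _ ⟨⟨b, d⟩, rfl⟩ -
  exact ⟨(a ⊔ b, c ⊓ d), by simp only [prod_inter_prod, Ioi_inter_Ioi, Iic_inter_Iic]⟩

lemma generateFrom_range_Ioi_prod_Iic [Finite ι] :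
    MeasurableSpace.generateFrom (range fun q : ℝ × (ι → ℝ) => Ioi q.1 ×ˢ Iic q.2) =
      (inferInstance : MeasurableSpace (ℝ × (ι → ℝ))) := by
  have hIoi : MeasurableSpace.generateFrom (range Ioi) = (inferInstance : MeasurableSpace ℝ) :=
    (borel_eq_generateFrom_Ioi ℝ).symm.trans BorelSpace.measurable_eq.symm
  have hIic : MeasurableSpace.generateFrom (range Iic) = (inferInstance : MeasurableSpace ℝ) :=
    (borel_eq_generateFrom_Iic ℝ).symm.trans BorelSpace.measurable_eq.symm
  have hpi : MeasurableSpace.generateFrom (pi univ '' pi univ fun _ : ι => range Iic) =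
      MeasurableSpace.pi :=
    generateFrom_eq_pi (fun _ => hIic) fun _ => isCountablySpanning_range_Iic
  rw [← generateFrom_eq_prod hIoi hpi isCountablySpanning_range_Ioi
    (.pi fun _ => isCountablySpanning_range_Iic)]
  congr 1
  ext s
  constructor
  · rintro ⟨⟨a, c⟩, rfl⟩
    exact ⟨Ioi a, ⟨a, rfl⟩, pi univ fun i => Iic (c i), ⟨_, fun i _ => ⟨c i, rfl⟩, rfl⟩,
      by rw [pi_univ_Iic]⟩
  · rintro ⟨_, ⟨a, rfl⟩, _, ⟨s, hs, rfl⟩, rfl⟩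
    choose c hc using fun i => hs i (mem_univ i)
    exact ⟨(a, c), by simp only [← pi_univ_Iic, hc]⟩

lemma iUnion_Ioi_neg_prod_Iic_natCast [Finite ι] :
    ⋃ n : ℕ, Ioi (-(n : ℝ)) ×ˢ Iic (fun _ : ι => (n : ℝ)) = univ := by
  refine iUnion_eq_univ_iff.2 fun p => ?_
  obtain ⟨M, hM⟩ := (finite_range p.2).bddAbove
  obtain ⟨n, hn⟩ := exists_nat_gt (max M (-p.1))
  exact ⟨n, neg_lt.1 ((le_max_right _ _).trans_lt hn),
    fun i => (hM (mem_range_self i)).trans ((le_max_left _ _).trans hn.le)⟩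

lemma Ioi_prod_Iic_eq_setOf (a : ℝ) (c : ι → ℝ) :
    Ioi a ×ˢ Iic c = {p : ℝ × (ι → ℝ) | a < p.1 ∧ ∀ i, p.2 i ≤ c i} := by
  ext p
  simp [Pi.le_def]

end Boxes

lemma measure_Ici_eq_measure_Ioi_of_rpow_scaling {μ : Measure ℝ} {α : ℝ}
    (hμ : ∀ t > 0, μ (Ioi t) = ENNReal.ofReal (t ^ (-α)) * μ (Ioi 1)) (hfin : μ (Ioi 1) ≠ ∞) :
    μ (Ici 1) = μ (Ioi 1) := by
  have hInter : ⋂ ε > (0 : ℝ), Ioi (1 - ε) = Ici 1 := by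
    ext x
    simp only [mem_iInter, mem_Ioi, mem_Ici]
    refine ⟨fun hx => not_lt.1 fun hx1 => ?_, fun hx ε hε => by linarith⟩
    simpa using hx (1 - x) (by linarith)
  have hmeasure : Tendsto (fun ε => μ (Ioi (1 - ε))) (𝓝[>] 0) (𝓝 (μ (Ici 1))) := by
    refine hInter ▸ tendsto_measure_biInter_gt (fun _ _ => measurableSet_Ioi.nullMeasurableSet)
      (fun _ _ _ hij => Ioi_subset_Ioi (by linarith)) ⟨1 / 2, by norm_num, ?_⟩
    rw [hμ _ (by norm_num)]
    exact ENNReal.mul_ne_top ENNReal.ofReal_ne_top hfin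
  have hscale : Tendsto (fun ε : ℝ => ENNReal.ofReal ((1 - ε) ^ (-α)) * μ (Ioi 1)) (𝓝[>] 0)
      (𝓝 (μ (Ioi 1))) := by
    have hcont : ContinuousAt (fun ε : ℝ => (1 - ε) ^ (-α)) 0 :=
      (continuousAt_const.sub continuousAt_id).rpow_const (Or.inl (by norm_num))
    simpa using ENNReal.Tendsto.mul_const
      (ENNReal.tendsto_ofReal (hcont.tendsto.mono_left nhdsWithin_le_nhds)) (Or.inr hfin)
  refine tendsto_nhds_unique hmeasure (hscale.congr' ?_)
  filter_upwards [Ioo_mem_nhdsGT one_pos] with ε hε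
  exact (hμ _ (by linarith [hε.2])).symm

section Homogeneous

variable {ι : Type*} {ν : Measure (ℝ × (ι → ℝ))} {α : ℝ} {κ : ι → ℝ} {t : ℝ}

def IsHomogeneous (ν : Measure (ℝ × (ι → ℝ))) (α : ℝ) (κ : ι → ℝ) : Prop :=
  ∀ t > 0, ∀ y₀ > 0, ∀ y : ι → ℝ,
    ν {p | t * y₀ < p.1 ∧ ∀ i, p.2 i ≤ t ^ κ i * y i}
      = ENNReal.ofReal (t ^ (-α)) * ν {p | y₀ < p.1 ∧ ∀ i, p.2 i ≤ y i}

noncomputable def rescale (κ : ι → ℝ) (t : ℝ) (p : ℝ × (ι → ℝ)) : ℝ × (ι → ℝ) :=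
  (p.1 / t, fun i => p.2 i / t ^ κ i)

lemma measurable_rescale : Measurable (rescale κ t) := by
  unfold rescale
  fun_prop

lemma preimage_rescale_Ioi_prod_Iic (ht : 0 < t) (a : ℝ) (c : ι → ℝ) :
    rescale κ t ⁻¹' (Ioi a ×ˢ Iic c)
      = {p | t * a < p.1 ∧ ∀ i, p.2 i ≤ t ^ κ i * c i} := by
  ext p
  simp only [Ioi_prod_Iic_eq_setOf, rescale, mem_preimage, mem_ofPred_eq, lt_div_iff₀ ht,
    div_le_iff₀ (Real.rpow_pos_of_pos ht _), mul_comm]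

lemma preimage_rescale_setOf_le_rpow_mul (ht : 0 < t) (y : ι → ℝ) :
    rescale κ t ⁻¹' {q | 1 < q.1 ∧ ∀ i, q.2 i ≤ q.1 ^ κ i * y i}
      = {p | t < p.1 ∧ ∀ i, p.2 i ≤ p.1 ^ κ i * y i} := by
  ext p
  simp only [rescale, mem_preimage, mem_ofPred_eq, lt_div_iff₀ ht, one_mul]
  refine and_congr_right fun hp => forall_congr' fun i => ?_
  rw [Real.div_rpow (ht.trans hp).le ht.le, div_mul_eq_mul_div,
    div_le_div_iff_of_pos_right (Real.rpow_pos_of_pos ht _)]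

lemma IsHomogeneous.map_rescale_restrict [Finite ι] (hom : IsHomogeneous ν α κ)
    (hfin : ν {p | 1 < p.1} ≠ ∞) (ht : 0 < t) :
    (ν.map (rescale κ t)).restrict {p | 1 < p.1}
      = ENNReal.ofReal (t ^ (-α)) • ν.restrict {p | 1 < p.1} := by
  have hbox (a : ℝ) (c : ι → ℝ) :
      Ioi a ×ˢ Iic c ∩ {p | 1 < p.1} = Ioi (max a 1) ×ˢ Iic c := by
    ext p
    simp only [mem_inter_iff, mem_prod, mem_Ioi, mem_ofPred_eq, max_lt_iff]
    tauto
  refine (Measure.ext_of_generateFrom_of_iUnion _ _ generateFrom_range_Ioi_prod_Iic.symm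
    isPiSystem_range_Ioi_prod_Iic iUnion_Ioi_neg_prod_Iic_natCast (fun n => ⟨(_, _), rfl⟩)
    (fun n => ?_) ?_).symm
  · rw [Measure.smul_apply, smul_eq_mul]
    exact ENNReal.mul_ne_top ENNReal.ofReal_ne_top <| ne_top_of_le_ne_top hfin <|
      (measure_mono (subset_univ _)).trans_eq (Measure.restrict_apply_univ _)
  · rintro _ ⟨⟨a, c⟩, rfl⟩
    have hmeas (b : ℝ) : MeasurableSet (Ioi b ×ˢ Iic c) := measurableSet_Ioi.prod measurableSet_Iic
    dsimp only
    rw [Measure.smul_apply, smul_eq_mul, Measure.restrict_apply (hmeas a),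
      Measure.restrict_apply (hmeas a), hbox, Measure.map_apply measurable_rescale (hmeas _),
      preimage_rescale_Ioi_prod_Iic ht, hom t ht _ (lt_max_of_lt_right one_pos),
      Ioi_prod_Iic_eq_setOf]

lemma IsHomogeneous.measure_preimage_rescale [Finite ι] (hom : IsHomogeneous ν α κ)
    (hfin : ν {p | 1 < p.1} ≠ ∞) (ht : 0 < t) {s : Set (ℝ × (ι → ℝ))} (hs : MeasurableSet s)
    (hs1 : s ⊆ {p | 1 < p.1}) :
    ν (rescale κ t ⁻¹' s) = ENNReal.ofReal (t ^ (-α)) * ν s := by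
  simpa [Measure.restrict_apply hs, inter_eq_left.2 hs1, Measure.map_apply measurable_rescale hs]
    using DFunLike.congr_fun (hom.map_rescale_restrict hfin ht) s

lemma IsHomogeneous.measure_fst_Ioi [Finite ι] (hom : IsHomogeneous ν α κ)
    (hfin : ν {p | 1 < p.1} ≠ ∞) (ht : 0 < t) :
    ν {p | t < p.1} = ENNReal.ofReal (t ^ (-α)) * ν {p | 1 < p.1} := by
  rw [← hom.measure_preimage_rescale hfin ht (measurableSet_lt measurable_const measurable_fst)
    subset_rfl]
  congr 1
  ext p
  simp [rescale, lt_div_iff₀ ht]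

lemma IsHomogeneous.measure_setOf_le_rpow_mul [Finite ι] (hom : IsHomogeneous ν α κ)
    (hfin : ν {p | 1 < p.1} ≠ ∞) (ht : 0 < t) (y : ι → ℝ) :
    ν {p | t < p.1 ∧ ∀ i, p.2 i ≤ p.1 ^ κ i * y i}
      = ENNReal.ofReal (t ^ (-α)) * ν {p | 1 < p.1 ∧ ∀ i, p.2 i ≤ p.1 ^ κ i * y i} := by
  rw [← preimage_rescale_setOf_le_rpow_mul ht]
  exact hom.measure_preimage_rescale hfin ht (measurableSet_setOfPred.2 (by fun_prop))
    fun p hp => hp.1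

lemma IsHomogeneous.fst_Ioi_ae_eq_fst_Ici [Finite ι] (hom : IsHomogeneous ν α κ)
    (hfin : ν {p | 1 ≤ p.1} ≠ ∞) :
    {p : ℝ × (ι → ℝ) | 1 < p.1} =ᵐ[ν] {p | 1 ≤ p.1} := by
  have hsub : {p : ℝ × (ι → ℝ) | 1 < p.1} ⊆ {p | 1 ≤ p.1} := fun p (hp : 1 < p.1) => hp.le
  have hfin' : ν {p | 1 < p.1} ≠ ∞ := ne_top_of_le_ne_top hfin (measure_mono hsub)
  have hfst (s : Set ℝ) (hs : MeasurableSet s) : ν.map Prod.fst s = ν (Prod.fst ⁻¹' s) :=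
    Measure.map_apply measurable_fst hs
  have hIci := measure_Ici_eq_measure_Ioi_of_rpow_scaling (μ := ν.map Prod.fst)
    (fun t ht => by
      rw [hfst _ measurableSet_Ioi, hfst _ measurableSet_Ioi]
      exact hom.measure_fst_Ioi hfin' ht)
    (by rwa [hfst _ measurableSet_Ioi])
  rw [hfst _ measurableSet_Ici, hfst _ measurableSet_Ioi] at hIci
  exact ae_eq_of_subset_of_measure_ge hsub hIci.le
    (measurableSet_lt measurable_const measurable_fst).nullMeasurableSet hfin

end Homogeneous

theorem stmt_4_general {h : ℕ} (ν : Measure (ℝ × (Fin h → ℝ))) (α : ℝ)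
    (κ : Fin h → ℝ)
    (hprob : ν {p | 1 ≤ p.1} = 1)
    (hom : ∀ t > 0, ∀ y₀ > 0, ∀ y : Fin h → ℝ,
      ν {p | t * y₀ < p.1 ∧ ∀ i, p.2 i ≤ t ^ κ i * y i}
        = ENNReal.ofReal (t ^ (-α)) * ν {p | y₀ < p.1 ∧ ∀ i, p.2 i ≤ y i}) :
    ∀ y₀ ≥ (1 : ℝ), ∀ y : Fin h → ℝ,
      ν {p | y₀ < p.1 ∧ ∀ i, p.2 i ≤ p.1 ^ κ i * y i}
        = ENNReal.ofReal (y₀ ^ (-α)) *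
            ν {p | 1 ≤ p.1 ∧ ∀ i, p.2 i ≤ p.1 ^ κ i * y i} := by
  intro y₀ hy₀ y
  replace hom : IsHomogeneous ν α κ := hom
  have hfin : ν {p | 1 ≤ p.1} ≠ ∞ := hprob ▸ ENNReal.one_ne_top
  have hfin' : ν {p | 1 < p.1} ≠ ∞ :=
    ne_top_of_le_ne_top hfin (measure_mono fun p (hp : 1 < p.1) => hp.le)
  rw [hom.measure_setOf_le_rpow_mul hfin' (by linarith) y]
  congr 1
  exact measure_congr ((hom.fst_Ioi_ae_eq_fst_Ici hfin).inter EventuallyEq.rfl)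

/-- Representation of the limiting conditional measure via the homogeneity property:
the measure of `{u₀ > y₀, uᵢ ≤ u₀^{κᵢ} yᵢ}` equals `y₀^{-α} G_h(y₁,…,y_h)`. -/
theorem stmt_4 {h : ℕ} (ν : Measure (ℝ × (Fin h → ℝ))) (α : ℝ) (hα : 0 < α)
    (κ : Fin h → ℝ)
    (hprob : ν {p | 1 ≤ p.1} = 1)
    (hom : ∀ t > 0, ∀ y₀ > 0, ∀ y : Fin h → ℝ,
      ν {p | t * y₀ < p.1 ∧ ∀ i, p.2 i ≤ t ^ κ i * y i}
        = ENNReal.ofReal (t ^ (-α)) * ν {p | y₀ < p.1 ∧ ∀ i, p.2 i ≤ y i}) :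
    ∀ y₀ ≥ (1 : ℝ), ∀ y : Fin h → ℝ,
      ν {p | y₀ < p.1 ∧ ∀ i, p.2 i ≤ p.1 ^ κ i * y i}
        = ENNReal.ofReal (y₀ ^ (-α)) *
            ν {p | 1 ≤ p.1 ∧ ∀ i, p.2 i ≤ p.1 ^ κ i * y i} :=
  stmt_4_general ν α κ hprob hom
end

section
/- Let X_t = σ_t Z_t where (Z_t) is i.i.d. with regularly varying right tail of index α > 0, (σ_t) is a nonnegative stationary process with E[σ₀^q] < ∞ for some q > α, and (σ_t) is independent of (Z_t). Then P(X₀ > x, X_h > x) = o(P(Z₀ > x)) as x → ∞ for every h ≥ 1; i.e. (X₀, X_h) is extremally independent. -/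
/-!
Let `F̄` be the tail of `Z₀` and fix `α < β < q`. Regular variation gives `F̄ z ≤ 2 ^ β F̄ (2z)` for
large `z`; iterating along dyadic scales and using monotonicity of `F̄` yields the
dominated-variation bound `F̄ (x / u) ≤ C u ^ β F̄ x` for all `u ≥ 1` and large `x`.

Fix `M ≥ 1`. If `X₀ > x` and `X_h > x`, then either `Z₀` and `Z_h` both exceed `x / M`, which by
independence has probability `F̄ (x / M) ^ 2 ≤ C M ^ β F̄ (x / M) F̄ x = o(F̄ x)`, or some `σ_t`
exceeds `M`. Cutting `{σ > M}` into the shells `σ ∈ [2 ^ k M, 2 ^ (k + 1) M)`, Markov's inequality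
for `σ ^ q` and the dominated-variation bound give a geometric series, so
`P(σ > M, σ Z > x) ≤ c M ^ (β - q) F̄ x`. Since `β < q`, letting `M → ∞` finishes the proof.
-/

open MeasureTheory Filter Topology ProbabilityTheory

lemma le_pow_mul_of_le_mul_two_mul {F : ℝ → ℝ} {K x₁ : ℝ} (hK : 0 ≤ K) (hx₁ : 0 ≤ x₁)
    (hF : ∀ z ≥ x₁, F z ≤ K * F (2 * z)) (n : ℕ) {z : ℝ} (hz : x₁ ≤ z) :
    F z ≤ K ^ n * F (2 ^ n * z) := by
  induction n generalizing z with
  | zero => simp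
  | succ n ih =>
    calc F z ≤ K * F (2 * z) := hF z hz
      _ ≤ K * (K ^ n * F (2 ^ n * (2 * z))) := by gcongr; exact ih (by linarith)
      _ = K ^ (n + 1) * F (2 ^ (n + 1) * z) := by ring_nf

lemma Antitone.le_rpow_mul_of_le_rpow_mul_two_mul {F : ℝ → ℝ} (hF : Antitone F)
    (hF₀ : ∀ x, 0 ≤ F x) {β x₁ : ℝ} (hβ : 0 ≤ β) (hx₁ : 0 < x₁)
    (hdoub : ∀ z ≥ x₁, F z ≤ 2 ^ β * F (2 * z)) {x y : ℝ} (hy : x₁ ≤ y) (hyx : y ≤ x) :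
    F y ≤ (2 * (x / y)) ^ β * F x := by
  have hy₀ : 0 < y := hx₁.trans_le hy
  have hx₀ : 0 < x := hy₀.trans_le hyx
  obtain ⟨n, hn, hn'⟩ := exists_nat_pow_near ((one_le_div hy₀).2 hyx) one_lt_two
  have hpow : (2 : ℝ) ^ (n + 1) ≤ 2 * (x / y) := by rw [pow_succ']; gcongr
  calc F y ≤ (2 ^ β) ^ (n + 1) * F (2 ^ (n + 1) * y) :=
        le_pow_mul_of_le_mul_two_mul (by positivity) hx₁.le hdoub _ hy
    _ = (2 ^ (n + 1)) ^ β * F (2 ^ (n + 1) * y) := by rw [Real.rpow_pow_comm zero_le_two]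
    _ ≤ (2 * (x / y)) ^ β * F x :=
        mul_le_mul (by gcongr) (hF ((div_lt_iff₀ hy₀).1 hn').le) (hF₀ _) (by positivity)

lemma eventually_le_rpow_mul_two_mul {F ℓ : ℝ → ℝ} {α β : ℝ} (hF₀ : ∀ x, 0 ≤ F x)
    (hF : ∀ x > 0, F x = x ^ (-α) * ℓ x)
    (hℓ : Tendsto (fun x => ℓ (2 * x) / ℓ x) atTop (𝓝 1)) (hαβ : α < β) :
    ∀ᶠ z in atTop, 0 < F z ∧ F z ≤ 2 ^ β * F (2 * z) := by
  have hratio : Tendsto (fun z => F (2 * z) / F z) atTop (𝓝 (2 ^ (-α))) := by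
    have hlim := hℓ.const_mul ((2 : ℝ) ^ (-α))
    rw [mul_one] at hlim
    refine hlim.congr' ?_
    filter_upwards [eventually_gt_atTop 0] with z hz
    rw [hF z hz, hF (2 * z) (by positivity), Real.mul_rpow zero_le_two hz.le,
      mul_assoc, mul_left_comm, mul_div_mul_left _ _ (Real.rpow_pos_of_pos hz _).ne',
      mul_div_assoc]
  have hβα : (2 : ℝ) ^ (-β) < 2 ^ (-α) := Real.rpow_lt_rpow_of_exponent_lt one_lt_two (by linarith)
  filter_upwards [hratio.eventually_const_lt hβα] with z hz
  have hFz : 0 < F z := by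
    refine (hF₀ z).lt_of_ne fun h => ?_
    rw [← h, div_zero] at hz
    exact (Real.rpow_pos_of_pos two_pos _).not_gt hz
  refine ⟨hFz, ?_⟩
  rw [lt_div_iff₀ hFz, Real.rpow_neg zero_le_two, inv_mul_eq_div, div_lt_iff₀ (by positivity)] at hz
  linarith

lemma Antitone.exists_le_mul_rpow_mul {F : ℝ → ℝ} (hF : Antitone F) (hF₀ : ∀ x, 0 ≤ F x)
    (hF₁ : ∀ x, F x ≤ 1) {β : ℝ} (hβ : 0 ≤ β)
    (hdoub : ∀ᶠ z in atTop, 0 < F z ∧ F z ≤ 2 ^ β * F (2 * z)) :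
    ∃ C x₀, ∀ x ≥ x₀, ∀ u ≥ 1, F (x / u) ≤ C * u ^ β * F x := by
  obtain ⟨x₁, hx₁⟩ := (hdoub.and (eventually_gt_atTop 0)).exists_forall_of_atTop
  have hx₁₀ : 0 < x₁ := (hx₁ x₁ le_rfl).2
  have hFx₁ : 0 < F x₁ := (hx₁ x₁ le_rfl).1.1
  have hdoub' : ∀ z ≥ x₁, F z ≤ 2 ^ β * F (2 * z) := fun z hz => (hx₁ z hz).1.2
  refine ⟨2 ^ β / F x₁, x₁, fun x hx u hu => ?_⟩
  have hu₀ : 0 < u := one_pos.trans_le hu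
  have hx₀ : 0 < x := hx₁₀.trans_le hx
  suffices F (x / u) * F x₁ ≤ (2 * u) ^ β * F x by
    rw [Real.mul_rpow zero_le_two hu₀.le] at this
    rw [div_mul_eq_mul_div, div_mul_eq_mul_div, le_div_iff₀ hFx₁]
    linarith
  rcases le_or_gt x₁ (x / u) with hxu | hxu
  · have hmain := hF.le_rpow_mul_of_le_rpow_mul_two_mul hF₀ hβ hx₁₀ hdoub' hxu
      (div_le_self hx₀.le hu)
    rw [div_div_cancel₀ hx₀.ne'] at hmain
    calc F (x / u) * F x₁ ≤ F (x / u) := mul_le_of_le_one_right (hF₀ _) (hF₁ _)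
      _ ≤ (2 * u) ^ β * F x := hmain
  · have hxx₁ : x / x₁ ≤ u := by
      rw [div_lt_iff₀ hu₀] at hxu
      rw [div_le_iff₀ hx₁₀]; linarith
    calc F (x / u) * F x₁ ≤ F x₁ := mul_le_of_le_one_left hFx₁.le (hF₁ _)
      _ ≤ (2 * (x / x₁)) ^ β * F x :=
          hF.le_rpow_mul_of_le_rpow_mul_two_mul hF₀ hβ hx₁₀ hdoub' le_rfl hx
      _ ≤ (2 * u) ^ β * F x := by gcongr; exact hF₀ x

section Probability

variable {Ω : Type*} [MeasurableSpace Ω] {μ : Measure Ω}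

lemma ProbabilityTheory.IndepFun.measureReal_inter_preimage_eq_mul {E₁ E₂ : Type*}
    [MeasurableSpace E₁] [MeasurableSpace E₂] {S : Ω → E₁} {T : Ω → E₂} (hST : IndepFun S T μ)
    {s : Set E₁} {t : Set E₂} (hs : MeasurableSet s) (ht : MeasurableSet t) :
    μ.real (S ⁻¹' s ∩ T ⁻¹' t) = μ.real (S ⁻¹' s) * μ.real (T ⁻¹' t) := by
  simp only [Measure.real, hST.measure_inter_preimage_eq_mul s t hs ht, ENNReal.toReal_mul]

lemma ProbabilityTheory.IdentDistrib.measureReal_mem_eq {Ω' E : Type*} [MeasurableSpace Ω']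
    [MeasurableSpace E] {ν : Measure Ω'} {f : Ω → E} {g : Ω' → E} (hfg : IdentDistrib f g μ ν)
    {s : Set E} (hs : MeasurableSet s) : μ.real (f ⁻¹' s) = ν.real (g ⁻¹' s) :=
  congrArg ENNReal.toReal (hfg.measure_mem_eq hs)

variable [IsFiniteMeasure μ]

lemma tendsto_measureReal_lt_atTop {X : Ω → ℝ} (hX : Measurable X) :
    Tendsto (fun x => μ.real {ω | x < X ω}) atTop (𝓝 0) := by
  have hlim := tendsto_measure_iInter_atTop (μ := μ) (s := fun x : ℝ => {ω | x < X ω})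
    (fun _ => (measurableSet_lt measurable_const hX).nullMeasurableSet)
    (fun _ _ hxy _ hω => hxy.trans_lt hω) ⟨0, measure_ne_top μ _⟩
  have hempty : (⋂ x : ℝ, {ω | x < X ω}) = ∅ :=
    Set.eq_empty_of_forall_notMem fun ω hω => lt_irrefl (X ω) (Set.mem_iInter.1 hω (X ω))
  rw [hempty, measure_empty] at hlim
  exact (ENNReal.tendsto_toReal ENNReal.zero_ne_top).comp hlim

lemma measureReal_ge_le_integral_rpow_div {S : Ω → ℝ} (hS : ∀ ω, 0 ≤ S ω) {q a : ℝ}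
    (hq : 0 ≤ q) (ha : 0 < a) (hint : Integrable (fun ω => S ω ^ q) μ) :
    μ.real {ω | a ≤ S ω} ≤ (∫ ω, S ω ^ q ∂μ) / a ^ q := by
  rw [le_div_iff₀' (by positivity)]
  calc a ^ q * μ.real {ω | a ≤ S ω} ≤ a ^ q * μ.real {ω | a ^ q ≤ S ω ^ q} :=
        mul_le_mul_of_nonneg_left
          (measureReal_mono fun ω (hω : a ≤ S ω) => Real.rpow_le_rpow ha.le hω hq) (by positivity)
    _ ≤ ∫ ω, S ω ^ q ∂μ :=
        mul_meas_ge_le_integral_of_nonneg (ae_of_all _ fun ω => by positivity [hS ω]) hint _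

lemma measureReal_lt_and_lt_mul_le {S T : Ω → ℝ} (hST : IndepFun S T μ) {K H β q M x : ℝ}
    (hβq : β < q) (hM : 1 ≤ M) (hx : 0 ≤ x)
    (hS : ∀ a > 0, μ.real {ω | a ≤ S ω} ≤ K / a ^ q)
    (hT : ∀ u ≥ 1, μ.real {ω | x / u < T ω} ≤ u ^ β * H) :
    μ.real {ω | M < S ω ∧ x < S ω * T ω} ≤
      K * 2 ^ β * M ^ (β - q) * H / (1 - 2 ^ (β - q)) := by
  have hM₀ : 0 < M := one_pos.trans_le hM
  have hK : 0 ≤ K := by simpa using measureReal_nonneg.trans (hS 1 one_pos)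
  have hH : 0 ≤ H := by simpa using measureReal_nonneg.trans (hT 1 le_rfl)
  set r : ℝ := 2 ^ (β - q) with hr
  have hr₁ : r < 1 := Real.rpow_lt_one_of_one_lt_of_neg one_lt_two (by linarith)
  set D : ℕ → Set Ω := fun k => {ω | 2 ^ k * M ≤ S ω} ∩ {ω | x / (2 ^ (k + 1) * M) < T ω}
  have hcover : {ω | M < S ω ∧ x < S ω * T ω} ⊆ ⋃ k, D k := by
    rintro ω ⟨hMS, hST⟩
    have hS₀ : 0 < S ω := hM₀.trans hMS
    obtain ⟨k, hk, hk'⟩ := exists_nat_pow_near ((one_le_div hM₀).2 hMS.le) one_lt_two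
    refine Set.mem_iUnion.2 ⟨k, (le_div_iff₀ hM₀).1 hk, ?_⟩
    calc x / (2 ^ (k + 1) * M) ≤ x / S ω :=
          div_le_div_of_nonneg_left hx hS₀ ((div_lt_iff₀ hM₀).1 hk').le
      _ < T ω := (div_lt_iff₀' hS₀).2 hST
  set c := K * 2 ^ β * M ^ (β - q) * H with hc
  have hD : ∀ k : ℕ, μ.real (D k) ≤ c * r ^ k := by
    intro k
    have h2k : (0 : ℝ) < 2 ^ k := by positivity
    calc μ.real (D k)
        = μ.real {ω | 2 ^ k * M ≤ S ω} * μ.real {ω | x / (2 ^ (k + 1) * M) < T ω} :=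
          hST.measureReal_inter_preimage_eq_mul measurableSet_Ici measurableSet_Ioi
      _ ≤ K / (2 ^ k * M) ^ q * ((2 ^ (k + 1) * M) ^ β * H) := by
          gcongr
          · exact hS _ (mul_pos h2k hM₀)
          · exact hT _ (one_le_mul_of_one_le_of_one_le (one_le_pow₀ one_le_two) hM)
      _ = c * r ^ k := by
          rw [hc, hr, Real.rpow_pow_comm zero_le_two, pow_succ', Real.mul_rpow h2k.le hM₀.le,
            mul_assoc, Real.mul_rpow zero_le_two (by positivity), Real.mul_rpow h2k.le hM₀.le,
            Real.rpow_sub h2k, Real.rpow_sub hM₀]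
          field_simp
  have hc₀ : 0 ≤ c := by positivity
  have hsum : HasSum (fun k : ℕ => c * r ^ k) (c / (1 - r)) := by
    simpa only [div_eq_mul_inv] using (hasSum_geometric_of_lt_one (by positivity) hr₁).mul_left c
  refine ENNReal.toReal_le_of_le_ofReal (hsum.nonneg fun k => by positivity) ?_
  calc μ {ω | M < S ω ∧ x < S ω * T ω} ≤ ∑' k, μ (D k) :=
        (measure_mono hcover).trans (measure_iUnion_le D)
    _ ≤ ∑' k : ℕ, ENNReal.ofReal (c * r ^ k) :=
        ENNReal.tsum_le_tsum fun k =>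
          (ENNReal.le_ofReal_iff_toReal_le (measure_ne_top μ _) (by positivity)).2 (hD k)
    _ = ENNReal.ofReal (c / (1 - r)) := by
        rw [← ENNReal.ofReal_tsum_of_nonneg (fun k => by positivity) hsum.summable, hsum.tsum_eq]

lemma div_lt_of_lt_mul_of_le {s t x M : ℝ} (hs : 0 ≤ s) (hsM : s ≤ M) (hx : 0 ≤ x)
    (h : x < s * t) : x / M < t := by
  have hs₀ : 0 < s := hs.lt_of_ne fun h₀ => by rw [← h₀, zero_mul] at h; linarith
  calc x / M ≤ x / s := div_le_div_of_nonneg_left hx hs₀ hsM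
    _ < t := (div_lt_iff₀' hs₀).2 h

lemma measureReal_lt_mul_and_lt_mul_le_add {S₀ S₁ T₀ T₁ : Ω → ℝ} (hS₀ : ∀ ω, 0 ≤ S₀ ω)
    (hS₁ : ∀ ω, 0 ≤ S₁ ω) {M x : ℝ} (hx : 0 ≤ x) :
    μ.real {ω | x < S₀ ω * T₀ ω ∧ x < S₁ ω * T₁ ω} ≤
      μ.real {ω | x / M < T₀ ω ∧ x / M < T₁ ω} + μ.real {ω | M < S₀ ω ∧ x < S₀ ω * T₀ ω} +
        μ.real {ω | M < S₁ ω ∧ x < S₁ ω * T₁ ω} := by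
  refine (measureReal_mono ?_).trans
    ((measureReal_union_le _ _).trans (add_le_add_left (measureReal_union_le _ _) _))
  rintro ω ⟨h₀, h₁⟩
  by_cases hM₀ : M < S₀ ω
  · exact Or.inl (Or.inr ⟨hM₀, h₀⟩)
  by_cases hM₁ : M < S₁ ω
  · exact Or.inr ⟨hM₁, h₁⟩
  exact Or.inl (Or.inl ⟨div_lt_of_lt_mul_of_le (hS₀ ω) (not_lt.1 hM₀) hx h₀,
    div_lt_of_lt_mul_of_le (hS₁ ω) (not_lt.1 hM₁) hx h₁⟩)

lemma measureReal_lt_mul_and_lt_mul_le {S₀ S₁ T₀ T₁ : Ω → ℝ} (hT : IndepFun T₀ T₁ μ)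
    (hST₀ : IndepFun S₀ T₀ μ) (hST₁ : IndepFun S₁ T₁ μ) (hS₀ : ∀ ω, 0 ≤ S₀ ω)
    (hS₁ : ∀ ω, 0 ≤ S₁ ω) (hS : IdentDistrib S₁ S₀ μ μ) (hT' : IdentDistrib T₁ T₀ μ μ)
    {K H β q M x : ℝ} (hβq : β < q) (hM : 1 ≤ M) (hx : 0 ≤ x)
    (hS₀q : ∀ a > 0, μ.real {ω | a ≤ S₀ ω} ≤ K / a ^ q)
    (hT₀ : ∀ u ≥ 1, μ.real {ω | x / u < T₀ ω} ≤ u ^ β * H) :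
    μ.real {ω | x < S₀ ω * T₀ ω ∧ x < S₁ ω * T₁ ω} ≤
      (M ^ β * μ.real {ω | x / M < T₀ ω} +
        2 * (K * 2 ^ β * M ^ (β - q) / (1 - 2 ^ (β - q)))) * H := by
  have hS₁q : ∀ a > 0, μ.real {ω | a ≤ S₁ ω} ≤ K / a ^ q := fun a ha =>
    (hS.measureReal_mem_eq measurableSet_Ici).trans_le (hS₀q a ha)
  have hT₁ : ∀ u ≥ 1, μ.real {ω | x / u < T₁ ω} ≤ u ^ β * H := fun u hu =>
    (hT'.measureReal_mem_eq measurableSet_Ioi).trans_le (hT₀ u hu)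
  have hboth : μ.real {ω | x / M < T₀ ω ∧ x / M < T₁ ω} ≤
      M ^ β * μ.real {ω | x / M < T₀ ω} * H := by
    calc μ.real {ω | x / M < T₀ ω ∧ x / M < T₁ ω}
        = μ.real {ω | x / M < T₀ ω} * μ.real {ω | x / M < T₁ ω} :=
          hT.measureReal_inter_preimage_eq_mul measurableSet_Ioi measurableSet_Ioi
      _ ≤ μ.real {ω | x / M < T₀ ω} * (M ^ β * H) := by gcongr; exact hT₁ M hM
      _ = _ := by ring
  have h₀ := measureReal_lt_and_lt_mul_le hST₀ hβq hM hx hS₀q hT₀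
  have h₁ := measureReal_lt_and_lt_mul_le hST₁ hβq hM hx hS₁q hT₁
  calc _ ≤ _ := measureReal_lt_mul_and_lt_mul_le_add hS₀ hS₁ hx
    _ ≤ _ := add_le_add (add_le_add hboth h₀) h₁
    _ = _ := by ring

end Probability

lemma tendsto_zero_of_eventually_le_add {ι κ : Type*} {l : Filter ι} {l' : Filter κ} [l'.NeBot]
    {f : ι → ℝ} {g : κ → ι → ℝ} {c : κ → ℝ} (hf : ∀ᶠ x in l, 0 ≤ f x)
    (hc : Tendsto c l' (𝓝 0))
    (hfg : ∀ᶠ M in l', Tendsto (g M) l (𝓝 0) ∧ ∀ᶠ x in l, f x ≤ g M x + c M) :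
    Tendsto f l (𝓝 0) := by
  refine tendsto_order.2 ⟨fun a ha => hf.mono fun x hx => ha.trans_le hx, fun a ha => ?_⟩
  obtain ⟨M, hcM, hgM, hfM⟩ := ((hc.eventually (gt_mem_nhds (half_pos ha))).and hfg).exists
  filter_upwards [hgM.eventually (gt_mem_nhds (half_pos ha)), hfM] with x hgx hfx
  linarith

theorem stmt_8_general {Ω : Type*} [MeasurableSpace Ω] (μ : Measure Ω) [IsProbabilityMeasure μ]
    (σ Z : ℕ → Ω → ℝ) (hZm : ∀ t, Measurable (Z t))
    (α q : ℝ) (hα : 0 < α) (hq : α < q)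
    (ℓ : ℝ → ℝ)
    (hslow : ∀ t > 0, Tendsto (fun x => ℓ (t * x) / ℓ x) atTop (𝓝 1))
    (htail : ∀ x > 0, (μ {ω | x < Z 0 ω}).toReal = x ^ (-α) * ℓ x)
    (hZindep : iIndepFun Z μ)
    (hZident : ∀ t, IdentDistrib (Z t) (Z 0) μ μ)
    (hσnonneg : ∀ t ω, 0 ≤ σ t ω)
    (hσstat : ∀ t, IdentDistrib (σ t) (σ 0) μ μ)
    (hσmom : Integrable (fun ω => σ 0 ω ^ q) μ)
    (hindep : ∀ h : ℕ, IndepFun (fun ω => (σ 0 ω, σ h ω)) (fun ω => (Z 0 ω, Z h ω)) μ) :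
    ∀ h : ℕ, 1 ≤ h →
      Tendsto
        (fun x => (μ {ω | x < σ 0 ω * Z 0 ω ∧ x < σ h ω * Z h ω}).toReal /
          (μ {ω | x < Z 0 ω}).toReal)
        atTop (𝓝 0) := by
  intro h hh
  set F : ℝ → ℝ := fun x => μ.real {ω | x < Z 0 ω}
  obtain ⟨β, hαβ, hβq⟩ := exists_between hq
  have hF₀ : ∀ x, 0 ≤ F x := fun _ => measureReal_nonneg
  have hdoub := eventually_le_rpow_mul_two_mul hF₀ htail (hslow 2 two_pos) hαβ
  obtain ⟨C, x₀, hC⟩ := Antitone.exists_le_mul_rpow_mul (F := F)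
    (fun a b hab => measureReal_mono fun ω (hω : b < Z 0 ω) => hab.trans_lt hω) hF₀
    (fun _ => measureReal_le_one) (hα.trans hαβ).le hdoub
  set K := ∫ ω, σ 0 ω ^ q ∂μ
  have hmarkov : ∀ a > 0, μ.real {ω | a ≤ σ 0 ω} ≤ K / a ^ q := fun a ha =>
    measureReal_ge_le_integral_rpow_div (hσnonneg 0) (hα.trans hq).le ha hσmom
  refine tendsto_zero_of_eventually_le_add (l' := atTop) (g := fun M x => M ^ β * F (x / M) * C)
    (c := fun M => 2 * K * 2 ^ β * C / (1 - 2 ^ (β - q)) * M ^ (β - q))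
    (Eventually.of_forall fun x => div_nonneg measureReal_nonneg (hF₀ x))
    (by simpa using (tendsto_rpow_neg_atTop (sub_pos.2 hβq)).const_mul _) ?_
  filter_upwards [eventually_ge_atTop 1] with M hM
  refine ⟨by simpa using (((tendsto_measureReal_lt_atTop (hZm 0)).comp
      (tendsto_id.atTop_div_const (one_pos.trans_le hM))).const_mul (M ^ β)).mul_const C, ?_⟩
  filter_upwards [eventually_ge_atTop x₀, eventually_ge_atTop 0, hdoub] with x hx hx₀ hFx
  have hjoint := measureReal_lt_mul_and_lt_mul_le (hZindep.indepFun (by omega : (0 : ℕ) ≠ h))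
    ((hindep h).comp measurable_fst measurable_fst) ((hindep h).comp measurable_snd measurable_snd)
    (hσnonneg 0) (hσnonneg h) (hσstat h) (hZident h) hβq hM hx₀ hmarkov
    (H := C * F x) fun u hu => (hC x hx u hu).trans_eq (by ring)
  exact (div_le_iff₀ hFx.1).2 (hjoint.trans_eq (by ring))

/-- Extremal independence of the stochastic volatility process `X_t = σ_t Z_t`:
`P(X₀ > x, X_h > x) = o(P(Z₀ > x))`. -/
theorem stmt_8 {Ω : Type*} [MeasurableSpace Ω] (μ : Measure Ω) [IsProbabilityMeasure μ]
    (σ Z : ℕ → Ω → ℝ) (hσm : ∀ t, Measurable (σ t)) (hZm : ∀ t, Measurable (Z t))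
    (α q : ℝ) (hα : 0 < α) (hq : α < q)
    (ℓ : ℝ → ℝ)
    (hslow : ∀ t > 0, Tendsto (fun x => ℓ (t * x) / ℓ x) atTop (𝓝 1))
    (htail : ∀ x > 0, (μ {ω | x < Z 0 ω}).toReal = x ^ (-α) * ℓ x)
    (hZindep : iIndepFun Z μ)
    (hZident : ∀ t, IdentDistrib (Z t) (Z 0) μ μ)
    (hσnonneg : ∀ t ω, 0 ≤ σ t ω)
    (hσstat : ∀ t, IdentDistrib (σ t) (σ 0) μ μ)
    (hσmom : Integrable (fun ω => σ 0 ω ^ q) μ)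
    (hindep : ∀ h : ℕ, IndepFun (fun ω => (σ 0 ω, σ h ω)) (fun ω => (Z 0 ω, Z h ω)) μ) :
    ∀ h : ℕ, 1 ≤ h →
      Tendsto
        (fun x => (μ {ω | x < σ 0 ω * Z 0 ω ∧ x < σ h ω * Z h ω}).toReal /
          (μ {ω | x < Z 0 ω}).toReal)
        atTop (𝓝 0) :=
  stmt_8_general μ σ Z hZm α q hα hq ℓ hslow htail hZindep hZident hσnonneg hσstat hσmom hindep
end

section
/- Let Π be the transition kernel of a Markov chain on [0,∞) defined by Π(x, A) = (1 − k(x)) F_R(x^{−φ} A) + k(x) F_R(A), where F_R is a probability distribution on [0,∞), φ > 0, and k : [0,∞) → [0,1] is measurable with lim_{x→∞} k(x) = η. Then for every Borel set A with G(∂A) = 0, lim_{x→∞} Π(x, x^φ A) = G(A), where G(A) = (1 − η) F_R(A) + η δ₀(A). -/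
/-!
Substituting `a ↦ x ^ (-φ) * a` gives `Π(x, x^φ A) = (1 - k x) F_R(A) + k x F_R(x^φ A)`.
As `c → ∞`, the dilates `c • A` exhaust `F_R` when `0 ∈ interior A` and escape every ball when
`0 ∉ closure A`, so `F_R(c • A) → δ₀(A)` whenever `0 ∉ ∂A`. If instead `0 ∈ ∂A`, the condition
`G(∂A) = 0` forces `η = 0`, and the bounded second term vanishes in the limit.
-/

open MeasureTheory Filter Topology Classical

open Metric Set
open scoped Pointwise

section MeasureOfBalls

variable {α : Type*} [PseudoMetricSpace α] [MeasurableSpace α]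

theorem tendsto_measure_ball_atTop (μ : Measure α) (x : α) :
    Tendsto (fun r => μ (ball x r)) atTop (𝓝 (μ univ)) := by
  have hunion : ⋃ r : ℝ, ball x r = univ :=
    iUnion_eq_univ_iff.2 fun y => ⟨dist y x + 1, by simp [mem_ball]⟩
  have := tendsto_measure_iUnion_atTop (μ := μ) (s := ball x) fun _ _ => ball_subset_ball
  rwa [hunion] at this

theorem tendsto_measure_compl_ball_atTop [OpensMeasurableSpace α] (μ : Measure α)
    [IsFiniteMeasure μ] (x : α) :
    Tendsto (fun r => μ (ball x r)ᶜ) atTop (𝓝 0) := by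
  simp_rw [measure_compl measurableSet_ball (measure_ne_top μ _)]
  simpa using ENNReal.Tendsto.sub tendsto_const_nhds (tendsto_measure_ball_atTop μ x)
    (.inl (measure_ne_top μ univ))

end MeasureOfBalls

section DilatedSets

variable {E : Type*} [NormedAddCommGroup E] [NormedSpace ℝ E] {A : Set E} {c ε : ℝ}

theorem ball_subset_smul_set (hc : 0 < c) (hA : ball (0 : E) ε ⊆ A) :
    ball (0 : E) (c * ε) ⊆ c • A := by
  simpa [_root_.smul_ball hc.ne', Real.norm_of_nonneg hc.le] using Set.smul_set_mono (a := c) hA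

theorem smul_set_subset_compl_ball (hc : 0 < c) (hA : Disjoint (ball (0 : E) ε) A) :
    c • A ⊆ (ball (0 : E) (c * ε))ᶜ := by
  rintro _ ⟨a, ha, rfl⟩
  have hεa : ε ≤ ‖a‖ := by
    simpa [mem_ball] using (hA.notMem_of_mem_right ha)
  simpa [mem_ball, norm_smul, Real.norm_of_nonneg hc.le] using
    mul_le_mul_of_nonneg_left hεa hc.le

variable [MeasurableSpace E] (μ : Measure E)

theorem tendsto_measure_smul_set_of_mem_interior [IsProbabilityMeasure μ]
    (h0 : (0 : E) ∈ interior A) : Tendsto (fun c : ℝ => μ (c • A)) atTop (𝓝 1) := by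
  obtain ⟨ε, hε, hball⟩ := isOpen_iff.1 isOpen_interior 0 h0
  have hballs : Tendsto (fun c : ℝ => μ (ball 0 (c * ε))) atTop (𝓝 1) := by
    rw [← measure_univ (μ := μ)]
    exact (tendsto_measure_ball_atTop μ 0).comp (tendsto_id.atTop_mul_const hε)
  refine tendsto_of_tendsto_of_tendsto_of_le_of_le' hballs tendsto_const_nhds ?_
    (Eventually.of_forall fun _ => prob_le_one)
  filter_upwards [eventually_gt_atTop 0] with c hc
  exact measure_mono (ball_subset_smul_set hc (hball.trans interior_subset))

theorem tendsto_measure_smul_set_of_notMem_closure [OpensMeasurableSpace E] [IsFiniteMeasure μ]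
    (h0 : (0 : E) ∉ closure A) : Tendsto (fun c : ℝ => μ (c • A)) atTop (𝓝 0) := by
  obtain ⟨ε, hε, hball⟩ := isOpen_iff.1 isClosed_closure.isOpen_compl 0 h0
  have hdisj : Disjoint (ball (0 : E) ε) A :=
    (subset_compl_iff_disjoint_right.1 hball).mono_right subset_closure
  refine tendsto_of_tendsto_of_tendsto_of_le_of_le' tendsto_const_nhds
    ((tendsto_measure_compl_ball_atTop μ 0).comp (tendsto_id.atTop_mul_const hε))
    (Eventually.of_forall fun _ => zero_le) ?_
  filter_upwards [eventually_gt_atTop 0] with c hc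
  exact measure_mono (smul_set_subset_compl_ball hc hdisj)

theorem tendsto_measureReal_smul_set_of_notMem_frontier [OpensMeasurableSpace E]
    [IsProbabilityMeasure μ] (h0 : (0 : E) ∉ frontier A) :
    Tendsto (fun c : ℝ => μ.real (c • A)) atTop (𝓝 (if (0 : E) ∈ A then 1 else 0)) := by
  by_cases hA : (0 : E) ∈ A
  · have hint : (0 : E) ∈ interior A := by
      by_contra h
      exact h0 ⟨subset_closure hA, h⟩
    rw [if_pos hA]
    exact (ENNReal.tendsto_toReal ENNReal.one_ne_top).comp
      (tendsto_measure_smul_set_of_mem_interior μ hint)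
  · have hcl : (0 : E) ∉ closure A := fun h => h0 ⟨h, fun h' => hA (interior_subset h')⟩
    rw [if_neg hA]
    exact (ENNReal.tendsto_toReal ENNReal.zero_ne_top).comp
      (tendsto_measure_smul_set_of_notMem_closure μ hcl)

end DilatedSets

theorem stmt_11_general (FR : Measure ℝ) [IsProbabilityMeasure FR]
    (φ η : ℝ) (hφ : 0 < φ) (hη0 : 0 ≤ η) (hη1 : η ≤ 1)
    (k : ℝ → ℝ)
    (hklim : Tendsto k atTop (𝓝 η))
    (Pi : ℝ → Set ℝ → ℝ)
    (hPi : ∀ x > 0, ∀ A : Set ℝ,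
      Pi x A = (1 - k x) * (FR ((fun a => x ^ (-φ) * a) '' A)).toReal
        + k x * (FR A).toReal)
    (G : Set ℝ → ℝ)
    (hGdef : ∀ A : Set ℝ,
      G A = (1 - η) * (FR A).toReal + η * (if (0 : ℝ) ∈ A then 1 else 0)) :
    ∀ A : Set ℝ, MeasurableSet A → G (frontier A) = 0 →
      Tendsto (fun x => Pi x ((fun a => x ^ φ * a) '' A)) atTop (𝓝 (G A)) := by
  intro A _ hG
  have hPi_dilate : (fun x => Pi x (x ^ φ • A))
      =ᶠ[atTop] fun x => (1 - k x) * FR.real A + k x * FR.real (x ^ φ • A) := by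
    filter_upwards [eventually_gt_atTop 0] with x hx
    rw [hPi x hx, Real.rpow_neg hx.le]
    change _ * FR.real ((x ^ φ)⁻¹ • x ^ φ • A) + _ = _
    rw [inv_smul_smul₀ (Real.rpow_pos_of_pos hx φ).ne']
    rfl
  change Tendsto (fun x => Pi x (x ^ φ • A)) atTop _
  rw [tendsto_congr' hPi_dilate, hGdef A]
  refine ((tendsto_const_nhds.sub hklim).mul_const _).add ?_
  by_cases h0 : (0 : ℝ) ∈ frontier A
  · have hη : η = 0 := by
      rw [hGdef, if_pos h0] at hG
      linarith [mul_nonneg (sub_nonneg.2 hη1) (ENNReal.toReal_nonneg (a := FR (frontier A)))]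
    subst hη
    rw [zero_mul]
    exact hklim.zero_mul_isBoundedUnder_le
      (isBoundedUnder_of ⟨1, fun x => by simp [abs_of_nonneg measureReal_nonneg]⟩)
  · exact hklim.mul
      ((tendsto_measureReal_smul_set_of_notMem_frontier FR h0).comp (tendsto_rpow_atTop hφ))

/-- Asymptotic homogeneity of the switching exponential AR(1) transition kernel:
`Π(x, x^φ A) → G(A) = (1-η) F_R(A) + η δ₀(A)` for `G`-continuity sets `A`. -/
theorem stmt_11 (FR : Measure ℝ) [IsProbabilityMeasure FR]
    (φ η : ℝ) (hφ : 0 < φ) (hη0 : 0 ≤ η) (hη1 : η ≤ 1)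
    (k : ℝ → ℝ) (hk : ∀ x, k x ∈ Set.Icc (0 : ℝ) 1) (hkm : Measurable k)
    (hklim : Tendsto k atTop (𝓝 η))
    (Pi : ℝ → Set ℝ → ℝ)
    (hPi : ∀ x > 0, ∀ A : Set ℝ,
      Pi x A = (1 - k x) * (FR ((fun a => x ^ (-φ) * a) '' A)).toReal
        + k x * (FR A).toReal)
    (G : Set ℝ → ℝ)
    (hGdef : ∀ A : Set ℝ,
      G A = (1 - η) * (FR A).toReal + η * (if (0 : ℝ) ∈ A then 1 else 0)) :
    ∀ A : Set ℝ, MeasurableSet A → G (frontier A) = 0 →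
      Tendsto (fun x => Pi x ((fun a => x ^ φ * a) '' A)) atTop (𝓝 (G A)) :=
  stmt_11_general FR φ η hφ hη0 hη1 k hklim Pi hPi G hGdef
end

section
/- Let ε₀ and ξ* be independent random variables with e^{ε₀} regularly varying with right tail index α > 0 and E[e^{qξ*}] < ∞ for some q > α. Then for every c > 0, limsup_{x→∞} P(e^{ε₀} e^{ξ*} > x, e^{ε₀} ≤ cx) / P(e^{ε₀} > x) ≤ C c^{q−α} for some constant C not depending on c; consequently lim_{c→0} limsup_{x→∞} P(e^{ε₀} e^{ξ*} > x, e^{ε₀} ≤ cx)/P(e^{ε₀} > x) = 0. -/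
/-!
Write `T y = P(e^{ε₀} > y)`. Markov's inequality at order `q` and independence give
`P(e^{ε₀} e^{ξ*} > x, e^{ε₀} ≤ cx) ≤ x^{-q} E[e^{qξ*}] E[e^{qε₀}; e^{ε₀} ≤ cx]`.
Regular variation yields the doubling bound `T y ≤ 2^β T (2y)` for large `y`, for any
`β ∈ (α, q)`. Splitting `{e^{ε₀} ≤ z}` into dyadic shells then gives the Karamata-type estimate
`E[e^{qε₀}; e^{ε₀} ≤ z] ≤ const + K z^q T z`, and iterating the doubling bound (Potter's bound)
shows `x^{-q} / T x → 0`. Dividing by `T x` and using `T (cx) / T x → c^{-α}` leaves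
`limsup ≤ E[e^{qξ*}] K c^{q-α}`.
-/

open MeasureTheory Filter Topology ProbabilityTheory Finset

lemma tendsto_div_of_eq_rpow_mul {T ℓ : ℝ → ℝ} {α t : ℝ} (ht : 0 < t)
    (hℓ : Tendsto (fun x => ℓ (t * x) / ℓ x) atTop (𝓝 1))
    (hT : ∀ x > 0, T x = x ^ (-α) * ℓ x) :
    Tendsto (fun x => T (t * x) / T x) atTop (𝓝 (t ^ (-α))) := by
  have heq : (fun x => t ^ (-α) * (ℓ (t * x) / ℓ x)) =ᶠ[atTop] fun x => T (t * x) / T x := by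
    filter_upwards [eventually_gt_atTop 0] with x hx
    rw [hT x hx, hT (t * x) (by positivity), Real.mul_rpow ht.le hx.le, mul_assoc, mul_div_assoc,
      mul_div_mul_left _ _ (by positivity : x ^ (-α) ≠ 0)]
  simpa using (hℓ.const_mul (t ^ (-α))).congr' heq

section Doubling

variable {T : ℝ → ℝ} {x₀ : ℝ}

lemma exists_pos_le_mul_of_tendsto_div (hT0 : ∀ y, 0 ≤ T y) {t b L : ℝ}
    (hT : Tendsto (fun x => T (t * x) / T x) atTop (𝓝 L)) (hb : 0 < b) (hbL : b⁻¹ < L) :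
    ∃ x₀ > 0, ∀ y, x₀ ≤ y → 0 < T y ∧ T y ≤ b * T (t * y) := by
  obtain ⟨a, ha⟩ := eventually_atTop.1 (hT.eventually (lt_mem_nhds hbL))
  refine ⟨max a 1, by positivity, fun y hy => ?_⟩
  have hlt := ha y (le_of_max_le_left hy)
  have hTy : 0 < T y := (hT0 y).lt_of_ne fun h => by
    rw [← h, div_zero] at hlt
    exact (inv_pos.2 hb).not_gt hlt
  rw [lt_div_iff₀ hTy, inv_mul_eq_div, div_lt_iff₀' hb] at hlt
  exact ⟨hTy, hlt.le⟩

lemma le_pow_mul_of_doubling {r : ℝ} (hx₀ : 0 ≤ x₀) (hr : 0 ≤ r)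
    (hdbl : ∀ y, x₀ ≤ y → T y ≤ r * T (2 * y)) {y : ℝ} (hy : x₀ ≤ y) (n : ℕ) :
    T y ≤ r ^ n * T (2 ^ n * y) := by
  induction n with
  | zero => simp
  | succ n ih =>
    have hy' : x₀ ≤ 2 ^ n * y :=
      hy.trans (le_mul_of_one_le_left (hx₀.trans hy) (one_le_pow₀ one_le_two))
    calc T y ≤ r ^ n * T (2 ^ n * y) := ih
      _ ≤ r ^ n * (r * T (2 * (2 ^ n * y))) := by gcongr; exact hdbl _ hy'
      _ = r ^ (n + 1) * T (2 ^ (n + 1) * y) := by ring_nf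

lemma rpow_mul_le_two_rpow_mul_of_doubling (hT : Antitone T) (hT0 : ∀ y, 0 ≤ T y)
    (hx₀ : 0 < x₀) {β : ℝ} (hβ : 0 ≤ β) (hdbl : ∀ y, x₀ ≤ y → T y ≤ 2 ^ β * T (2 * y))
    {y z : ℝ} (hy : x₀ ≤ y) (hyz : y ≤ z) :
    y ^ β * T y ≤ 2 ^ β * (z ^ β * T z) := by
  have hy0 : 0 < y := hx₀.trans_le hy
  obtain ⟨n, hn, hn'⟩ := exists_nat_pow_near ((one_le_div hy0).2 hyz) one_lt_two
  have hzn : z ≤ 2 ^ (n + 1) * y := ((div_lt_iff₀ hy0).1 hn').le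
  have hnz : 2 ^ n * y ≤ z := (le_div_iff₀ hy0).1 hn
  calc y ^ β * T y ≤ y ^ β * ((2 ^ β) ^ (n + 1) * T z) := by
        gcongr
        exact (le_pow_mul_of_doubling hx₀.le (by positivity) hdbl hy _).trans
          (by gcongr; exact hT hzn)
    _ = 2 ^ β * ((2 ^ n * y) ^ β * T z) := by
        rw [Real.mul_rpow (by positivity) hy0.le, ← Real.rpow_pow_comm zero_le_two]; ring
    _ ≤ 2 ^ β * (z ^ β * T z) := by gcongr; exact hT0 z

lemma tendsto_rpow_neg_div_of_le_rpow_mul {β q c : ℝ} (hc : 0 < c) (hβq : β < q)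
    (hT : ∀ᶠ x in atTop, c ≤ x ^ β * T x) :
    Tendsto (fun x => x ^ (-q) / T x) atTop (𝓝 0) := by
  have hlim : Tendsto (fun x : ℝ => c⁻¹ * x ^ (β - q)) atTop (𝓝 0) := by
    simpa [neg_sub] using (tendsto_rpow_neg_atTop (sub_pos.2 hβq)).const_mul c⁻¹
  refine squeeze_zero' ?_ ?_ hlim <;>
    filter_upwards [hT, eventually_gt_atTop 0] with x hx hx0
  all_goals have hxT : 0 < x ^ β * T x := hc.trans_le hx
  all_goals have hTx : 0 < T x := pos_of_mul_pos_right hxT (by positivity)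
  · positivity
  · have hsplit : x ^ (-q) / T x = x ^ (β - q) / (x ^ β * T x) := by
      rw [sub_eq_add_neg, Real.rpow_add hx0]; field_simp
    rw [hsplit, div_le_iff₀ hxT]
    calc x ^ (β - q) = c⁻¹ * x ^ (β - q) * c := by field_simp
      _ ≤ c⁻¹ * x ^ (β - q) * (x ^ β * T x) := by gcongr

lemma sum_dyadic_le_of_doubling (hT0 : ∀ y, 0 ≤ T y) {q r : ℝ} (hx₀ : 0 ≤ x₀) (hr : 0 ≤ r)
    (hrq : r < 2 ^ q) (hdbl : ∀ y, x₀ ≤ y → T y ≤ r * T (2 * y)) {z : ℝ} (hz : 0 ≤ z) {n : ℕ}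
    (hn : 2 ^ n * x₀ ≤ z) :
    ∑ k ∈ range n, T (z / 2 ^ (k + 1)) * (z / 2 ^ k) ^ q ≤
      r / (1 - r / 2 ^ q) * (z ^ q * T z) := by
  have hterm : ∀ k ∈ range n,
      T (z / 2 ^ (k + 1)) * (z / 2 ^ k) ^ q ≤ r * (z ^ q * T z) * (r / 2 ^ q) ^ k := by
    intro k hk
    have hk : 2 ^ (k + 1) * x₀ ≤ z :=
      le_trans (by gcongr; exacts [one_le_two, mem_range.1 hk]) hn
    have hTk : T (z / 2 ^ (k + 1)) ≤ r ^ (k + 1) * T z := by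
      have := le_pow_mul_of_doubling hx₀ hr hdbl (y := z / 2 ^ (k + 1))
        (by rw [le_div_iff₀ (by positivity), mul_comm]; exact hk) (k + 1)
      rwa [mul_div_cancel₀ _ (by positivity)] at this
    calc T (z / 2 ^ (k + 1)) * (z / 2 ^ k) ^ q ≤ r ^ (k + 1) * T z * (z / 2 ^ k) ^ q := by
          gcongr
      _ = r * (z ^ q * T z) * (r / 2 ^ q) ^ k := by
        rw [Real.div_rpow hz (by positivity), ← Real.rpow_pow_comm zero_le_two, div_pow]
        field_simp
        ring
  have hρ : 0 ≤ r / 2 ^ q := by positivity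
  have hgeom : ∑ k ∈ range n, (r / 2 ^ q) ^ k ≤ 1 / (1 - r / 2 ^ q) := by
    have := geom_sum_Ico_le_of_lt_one (m := 0) (n := n) hρ ((div_lt_one (by positivity)).2 hrq)
    rwa [← range_eq_Ico, pow_zero] at this
  calc ∑ k ∈ range n, T (z / 2 ^ (k + 1)) * (z / 2 ^ k) ^ q
      ≤ r * (z ^ q * T z) * ∑ k ∈ range n, (r / 2 ^ q) ^ k := by
        rw [mul_sum]; exact sum_le_sum hterm
    _ ≤ r * (z ^ q * T z) * (1 / (1 - r / 2 ^ q)) := by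
        have := hT0 z
        gcongr
    _ = r / (1 - r / 2 ^ q) * (z ^ q * T z) := by ring

end Doubling

lemma rpow_le_add_sum_dyadic {x₀ y z q : ℝ} (hx₀ : 0 < x₀) (hq : 0 ≤ q) (hy : 0 ≤ y)
    (hyz : y ≤ z) {n : ℕ} (hn : z < 2 ^ (n + 1) * x₀) :
    y ^ q ≤ (2 * x₀) ^ q +
      ∑ k ∈ range n, if z / 2 ^ (k + 1) < y then (z / 2 ^ k) ^ q else 0 := by
  have hnonneg : ∀ k, 0 ≤ if z / 2 ^ (k + 1) < y then (z / 2 ^ k) ^ q else 0 := fun k => by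
    split_ifs
    · exact Real.rpow_nonneg (div_nonneg (hy.trans hyz) (by positivity)) q
    · rfl
  rcases le_or_gt y (2 * x₀) with hy2 | hy2
  · exact le_add_of_le_of_nonneg (Real.rpow_le_rpow hy hy2 hq) (sum_nonneg fun k _ => hnonneg k)
  have hy0 : 0 < y := by linarith
  obtain ⟨m, hm, hm'⟩ := exists_nat_pow_near ((one_le_div hy0).2 hyz) one_lt_two
  have hym : y ≤ z / 2 ^ m := by
    rw [le_div_iff₀ (by positivity), mul_comm]; exact (le_div_iff₀ hy0).1 hm
  have hlt : z / 2 ^ (m + 1) < y := by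
    rw [div_lt_iff₀ (by positivity), mul_comm]; exact (div_lt_iff₀ hy0).1 hm'
  have hmn : m < n := by
    have : (2 : ℝ) ^ (m + 1) * x₀ < 2 ^ (n + 1) * x₀ :=
      calc (2 : ℝ) ^ (m + 1) * x₀ = 2 ^ m * (2 * x₀) := by ring
        _ < 2 ^ m * y := by gcongr
        _ ≤ z := (le_div_iff₀ hy0).1 hm
        _ < 2 ^ (n + 1) * x₀ := hn
    have := (pow_lt_pow_iff_right₀ one_lt_two).1 (lt_of_mul_lt_mul_right this hx₀.le)
    omega
  calc y ^ q ≤ (z / 2 ^ m) ^ q := Real.rpow_le_rpow hy hym hq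
    _ = if z / 2 ^ (m + 1) < y then (z / 2 ^ m) ^ q else 0 := (if_pos hlt).symm
    _ ≤ ∑ k ∈ range n, if z / 2 ^ (k + 1) < y then (z / 2 ^ k) ^ q else 0 :=
        single_le_sum (f := fun k => if z / 2 ^ (k + 1) < y then (z / 2 ^ k) ^ q else 0)
          (fun k _ => hnonneg k) (mem_range.2 hmn)
    _ ≤ _ := le_add_of_nonneg_left (by positivity)

lemma limsup_nonneg_and_le_of_tendsto {ι : Type*} {l : Filter ι} [l.NeBot] {f g : ι → ℝ}
    {L : ℝ} (hf : ∀ i, 0 ≤ f i) (hfg : f ≤ᶠ[l] g) (hg : Tendsto g l (𝓝 L)) :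
    0 ≤ limsup f l ∧ limsup f l ≤ L :=
  ⟨le_limsup_of_frequently_le (Frequently.of_forall hf) (hg.isBoundedUnder_le.mono_le hfg),
    (limsup_le_limsup hfg (isCoboundedUnder_le_of_le l hf) hg.isBoundedUnder_le).trans
      hg.limsup_eq.le⟩

lemma tendsto_nhdsGT_zero_of_le_mul_rpow {F : ℝ → ℝ} {C p : ℝ} (hp : 0 < p)
    (hF : ∀ c > 0, 0 ≤ F c ∧ F c ≤ C * c ^ p) : Tendsto F (𝓝[>] 0) (𝓝 0) := by
  have hlim : Tendsto (fun c : ℝ => C * c ^ p) (𝓝[>] 0) (𝓝 0) := by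
    simpa [Real.zero_rpow hp.ne'] using
      ((Real.continuousAt_rpow_const 0 p (Or.inr hp.le)).tendsto.const_mul C).mono_left
        nhdsWithin_le_nhds
  refine tendsto_of_tendsto_of_tendsto_of_le_of_le' tendsto_const_nhds hlim ?_ ?_ <;>
    filter_upwards [self_mem_nhdsWithin] with c hc
  exacts [(hF c hc).1, (hF c hc).2]

section Probability

variable {Ω : Type*} [MeasurableSpace Ω] {μ : Measure Ω} [IsProbabilityMeasure μ] {X : Ω → ℝ}

lemma integral_indicator_rpow_le_sum_dyadic (hXm : Measurable X) (hX : ∀ ω, 0 ≤ X ω)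
    {q x₀ z : ℝ} (hq : 0 ≤ q) (hx₀ : 0 < x₀) (hz : 0 ≤ z) {n : ℕ} (hn : z < 2 ^ (n + 1) * x₀) :
    ∫ ω, {ω | X ω ≤ z}.indicator (fun ω => X ω ^ q) ω ∂μ ≤
      (2 * x₀) ^ q + ∑ k ∈ range n, μ.real {ω | z / 2 ^ (k + 1) < X ω} * (z / 2 ^ k) ^ q := by
  set A : ℕ → Set Ω := fun k => {ω | z / 2 ^ (k + 1) < X ω}
  have hA : ∀ k, MeasurableSet (A k) := fun k => measurableSet_lt measurable_const hXm
  have hAint : ∀ k ∈ range n, Integrable ((A k).indicator fun _ => (z / 2 ^ k) ^ q) μ :=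
    fun k _ => (integrable_const _).indicator (hA k)
  set F : Ω → ℝ := fun ω =>
    (2 * x₀) ^ q + ∑ k ∈ range n, (A k).indicator (fun _ => (z / 2 ^ k) ^ q) ω
  have hFint : ∫ ω, F ω ∂μ = (2 * x₀) ^ q + ∑ k ∈ range n, μ.real (A k) * (z / 2 ^ k) ^ q := by
    rw [integral_add (integrable_const _) (integrable_finsetSum _ hAint),
      integral_finsetSum _ hAint]
    simp only [integral_const, probReal_univ, one_mul, integral_indicator_const _ (hA _),
      smul_eq_mul]
  rw [← hFint]
  refine integral_mono_of_nonneg (ae_of_all _ fun ω => ?_)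
    ((integrable_const _).add (integrable_finsetSum _ hAint)) (ae_of_all _ fun ω => ?_)
  · exact Set.indicator_nonneg (fun ω _ => Real.rpow_nonneg (hX ω) q) ω
  by_cases hω : X ω ≤ z
  · rw [Set.indicator_of_mem (s := {ω | X ω ≤ z}) hω]
    simpa only [F, A, Set.indicator_apply, Set.mem_ofPred_eq] using
      rpow_le_add_sum_dyadic hx₀ hq (hX ω) hω hn
  · rw [Set.indicator_of_notMem (s := {ω | X ω ≤ z}) hω]
    exact add_nonneg (by positivity)
      (sum_nonneg fun k _ => Set.indicator_nonneg (fun _ _ => by positivity) ω)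

lemma integral_indicator_rpow_le_of_doubling (hXm : Measurable X) (hX : ∀ ω, 0 ≤ X ω)
    {q x₀ r : ℝ} (hq : 0 ≤ q) (hx₀ : 0 < x₀) (hr : 0 ≤ r) (hrq : r < 2 ^ q)
    (hdbl : ∀ y, x₀ ≤ y → μ.real {ω | y < X ω} ≤ r * μ.real {ω | 2 * y < X ω})
    {z : ℝ} (hz : 2 * x₀ ≤ z) :
    ∫ ω, {ω | X ω ≤ z}.indicator (fun ω => X ω ^ q) ω ∂μ ≤
      (2 * x₀) ^ q + r / (1 - r / 2 ^ q) * (z ^ q * μ.real {ω | z < X ω}) := by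
  have hz0 : 0 ≤ z := by linarith
  obtain ⟨n, hn, hn'⟩ := exists_nat_pow_near (x := z / x₀) (by rw [le_div_iff₀ hx₀]; linarith)
    one_lt_two
  calc ∫ ω, {ω | X ω ≤ z}.indicator (fun ω => X ω ^ q) ω ∂μ
      ≤ (2 * x₀) ^ q + ∑ k ∈ range n, μ.real {ω | z / 2 ^ (k + 1) < X ω} * (z / 2 ^ k) ^ q :=
        integral_indicator_rpow_le_sum_dyadic hXm hX hq hx₀ hz0 ((div_lt_iff₀ hx₀).1 hn')
    _ ≤ _ := (add_le_add_iff_left _).2 <|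
        sum_dyadic_le_of_doubling (T := fun y => μ.real {ω | y < X ω})
          (fun _ => measureReal_nonneg) hx₀.le hr hrq hdbl hz0 ((le_div_iff₀ hx₀).1 hn)

variable {Z : Ω → ℝ}

lemma measureReal_lt_mul_and_le_le (hXm : Measurable X) (hZm : Measurable Z)
    (hX : ∀ ω, 0 ≤ X ω) (hZ : ∀ ω, 0 ≤ Z ω) (hXZ : IndepFun X Z μ) {q : ℝ} (hq : 0 < q)
    (hZq : Integrable (fun ω => Z ω ^ q) μ) {x s : ℝ} (hx : 0 < x) (hs : 0 ≤ s) :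
    μ.real {ω | x < X ω * Z ω ∧ X ω ≤ s} ≤
      x ^ (-q) * ((∫ ω, {ω | X ω ≤ s}.indicator (fun ω => X ω ^ q) ω ∂μ) * ∫ ω, Z ω ^ q ∂μ) := by
  set f : Ω → ℝ := fun ω => {ω | X ω ≤ s}.indicator (fun ω => X ω ^ q) ω
  have hφ : Measurable fun y : ℝ => (Set.Iic s).indicator (fun y => y ^ q) y :=
    (measurable_id.pow_const q).indicator measurableSet_Iic
  have hfZ : IndepFun f (fun ω => Z ω ^ q) μ := hXZ.comp hφ (measurable_id.pow_const q)
  have hf0 : ∀ ω, 0 ≤ f ω := fun ω => Set.indicator_nonneg (fun ω _ => Real.rpow_nonneg (hX ω) q) ω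
  have hfs : ∀ ω, f ω ≤ s ^ q := fun ω => by
    by_cases hω : X ω ≤ s
    · simp only [f, Set.indicator_of_mem (s := {ω | X ω ≤ s}) hω]
      exact Real.rpow_le_rpow (hX ω) hω hq.le
    · simp only [f, Set.indicator_of_notMem (s := {ω | X ω ≤ s}) hω]
      positivity
  have hint : Integrable (fun ω => f ω * Z ω ^ q) μ :=
    hZq.bdd_mul (c := s ^ q) (hφ.comp hXm).aestronglyMeasurable
      (ae_of_all _ fun ω => by rw [Real.norm_of_nonneg (hf0 ω)]; exact hfs ω)
  have hsub : {ω | x < X ω * Z ω ∧ X ω ≤ s} ⊆ {ω | x ^ q ≤ f ω * Z ω ^ q} := by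
    rintro ω ⟨hxXZ, hXs⟩
    simp only [Set.mem_ofPred_eq, f, Set.indicator_of_mem (s := {ω | X ω ≤ s}) hXs,
      ← Real.mul_rpow (hX ω) (hZ ω)]
    exact Real.rpow_le_rpow hx.le hxXZ.le hq.le
  have hmarkov := mul_meas_ge_le_integral_of_nonneg
    (ae_of_all _ fun ω => mul_nonneg (hf0 ω) (Real.rpow_nonneg (hZ ω) q)) hint (x ^ q)
  rw [hfZ.integral_fun_mul_eq_mul_integral (hφ.comp hXm).aestronglyMeasurable
    ((measurable_id.pow_const q).comp hZm).aestronglyMeasurable] at hmarkov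
  calc μ.real {ω | x < X ω * Z ω ∧ X ω ≤ s}
      ≤ μ.real {ω | x ^ q ≤ f ω * Z ω ^ q} := measureReal_mono hsub
    _ = x ^ (-q) * (x ^ q * μ.real {ω | x ^ q ≤ f ω * Z ω ^ q}) := by
        rw [← mul_assoc, ← Real.rpow_add hx, neg_add_cancel, Real.rpow_zero, one_mul]
    _ ≤ _ := mul_le_mul_of_nonneg_left hmarkov (by positivity)

lemma measureReal_lt_mul_and_le_le_of_doubling (hXm : Measurable X) (hZm : Measurable Z)
    (hX : ∀ ω, 0 ≤ X ω) (hZ : ∀ ω, 0 ≤ Z ω) (hXZ : IndepFun X Z μ) {q x₀ r : ℝ} (hq : 0 < q)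
    (hx₀ : 0 < x₀) (hr : 0 ≤ r) (hrq : r < 2 ^ q)
    (hdbl : ∀ y, x₀ ≤ y → μ.real {ω | y < X ω} ≤ r * μ.real {ω | 2 * y < X ω})
    (hZq : Integrable (fun ω => Z ω ^ q) μ) {c x : ℝ} (hc : 0 < c) (hx : 0 < x)
    (hcx : 2 * x₀ ≤ c * x) :
    μ.real {ω | x < X ω * Z ω ∧ X ω ≤ c * x} ≤ (∫ ω, Z ω ^ q ∂μ) *
      ((2 * x₀) ^ q * x ^ (-q) + r / (1 - r / 2 ^ q) * c ^ q * μ.real {ω | c * x < X ω}) := by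
  have hM : 0 ≤ ∫ ω, Z ω ^ q ∂μ := integral_nonneg fun ω => Real.rpow_nonneg (hZ ω) q
  calc μ.real {ω | x < X ω * Z ω ∧ X ω ≤ c * x}
      ≤ x ^ (-q) * ((∫ ω, {ω | X ω ≤ c * x}.indicator (fun ω => X ω ^ q) ω ∂μ) *
          ∫ ω, Z ω ^ q ∂μ) :=
        measureReal_lt_mul_and_le_le hXm hZm hX hZ hXZ hq hZq hx (by positivity)
    _ ≤ x ^ (-q) * (((2 * x₀) ^ q + r / (1 - r / 2 ^ q) *
          ((c * x) ^ q * μ.real {ω | c * x < X ω})) * ∫ ω, Z ω ^ q ∂μ) := by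
        gcongr
        exact integral_indicator_rpow_le_of_doubling hXm hX hq.le hx₀ hr hrq hdbl hcx
    _ = _ := by
        rw [Real.mul_rpow hc.le hx.le, Real.rpow_neg hx.le]
        field_simp

theorem exists_limsup_measureReal_lt_mul_and_le_div_le (hXm : Measurable X)
    (hZm : Measurable Z) (hX : ∀ ω, 0 ≤ X ω) (hZ : ∀ ω, 0 ≤ Z ω) (hXZ : IndepFun X Z μ)
    {α q : ℝ} (hα : 0 < α) (hαq : α < q) (hZq : Integrable (fun ω => Z ω ^ q) μ)
    (hreg : ∀ t > 0, Tendsto (fun x => μ.real {ω | t * x < X ω} / μ.real {ω | x < X ω})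
      atTop (𝓝 (t ^ (-α)))) :
    ∃ C, ∀ c > 0,
      0 ≤ limsup (fun x => μ.real {ω | x < X ω * Z ω ∧ X ω ≤ c * x} / μ.real {ω | x < X ω})
        atTop ∧
      limsup (fun x => μ.real {ω | x < X ω * Z ω ∧ X ω ≤ c * x} / μ.real {ω | x < X ω})
        atTop ≤ C * c ^ (q - α) := by
  set T : ℝ → ℝ := fun y => μ.real {ω | y < X ω}
  set β := (α + q) / 2 with hβ
  have hαβ : α < β := by linarith
  have hβq : β < q := by linarith
  have hT0 : ∀ y, 0 ≤ T y := fun y => measureReal_nonneg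
  have hT : Antitone T := fun y z h => measureReal_mono fun ω hω => h.trans_lt hω
  obtain ⟨x₀, hx₀, hdbl⟩ := exists_pos_le_mul_of_tendsto_div hT0 (hreg 2 two_pos)
    (b := 2 ^ β) (by positivity) (by
      rw [← Real.rpow_neg zero_le_two]
      exact Real.rpow_lt_rpow_of_exponent_lt one_lt_two (neg_lt_neg hαβ))
  have hsmall : Tendsto (fun x => x ^ (-q) / T x) atTop (𝓝 0) := by
    refine tendsto_rpow_neg_div_of_le_rpow_mul (c := x₀ ^ β * T x₀ / 2 ^ β)
      (by have := (hdbl x₀ le_rfl).1; positivity) hβq ?_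
    filter_upwards [eventually_ge_atTop x₀] with x hx
    rw [div_le_iff₀' (by positivity)]
    exact rpow_mul_le_two_rpow_mul_of_doubling hT hT0 hx₀ (by linarith)
      (fun y hy => (hdbl y hy).2) le_rfl hx
  set M := ∫ ω, Z ω ^ q ∂μ
  set K : ℝ := 2 ^ β / (1 - 2 ^ β / 2 ^ q)
  refine ⟨M * K, fun c hc => limsup_nonneg_and_le_of_tendsto
    (fun x => div_nonneg measureReal_nonneg measureReal_nonneg) ?_
    (g := fun x => M * (2 * x₀) ^ q * (x ^ (-q) / T x) + M * K * c ^ q * (T (c * x) / T x)) ?_⟩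
  · filter_upwards [eventually_ge_atTop x₀, eventually_ge_atTop (2 * x₀ / c)] with x hx hxc
    have hx0 : 0 < x := hx₀.trans_le hx
    have hTx : 0 < T x := (hdbl x hx).1
    rw [div_le_iff₀ hTx]
    calc μ.real {ω | x < X ω * Z ω ∧ X ω ≤ c * x}
        ≤ M * ((2 * x₀) ^ q * x ^ (-q) + K * c ^ q * T (c * x)) :=
          measureReal_lt_mul_and_le_le_of_doubling hXm hZm hX hZ hXZ (by linarith) hx₀
            (by positivity)
            (Real.rpow_lt_rpow_of_exponent_lt one_lt_two hβq) (fun y hy => (hdbl y hy).2)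
            hZq hc hx0 (by rwa [div_le_iff₀' hc] at hxc)
      _ = _ := by field_simp
  · have hlim := (hsmall.const_mul (M * (2 * x₀) ^ q)).add ((hreg c hc).const_mul (M * K * c ^ q))
    convert hlim using 2
    rw [mul_zero, zero_add, Real.rpow_sub hc, Real.rpow_neg hc.le]
    ring

end Probability

/-- Negligibility of the truncated product: if `e^{ε₀}` is regularly varying with index
`α` and `ξ*` is independent with `E[e^{qξ*}] < ∞` for some `q > α`, then
`limsup_{x→∞} P(e^{ε₀}e^{ξ*} > x, e^{ε₀} ≤ cx)/P(e^{ε₀} > x) ≤ C c^{q-α}`,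
and the iterated limit as `c → 0⁺` is `0`. -/
theorem stmt_14 {Ω : Type*} [MeasurableSpace Ω] (μ : Measure Ω) [IsProbabilityMeasure μ]
    (ε ξ : Ω → ℝ) (hεm : Measurable ε) (hξm : Measurable ξ)
    (hindep : IndepFun ε ξ μ)
    (α q : ℝ) (hα : 0 < α) (hq : α < q)
    (ℓ : ℝ → ℝ)
    (hslow : ∀ t > 0, Tendsto (fun x => ℓ (t * x) / ℓ x) atTop (𝓝 1))
    (htail : ∀ x > 0, (μ {ω | x < Real.exp (ε ω)}).toReal = x ^ (-α) * ℓ x)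
    (hmom : Integrable (fun ω => Real.exp (q * ξ ω)) μ) :
    ∃ C : ℝ,
      (∀ c > 0, Filter.limsup
        (fun x => (μ {ω | x < Real.exp (ε ω) * Real.exp (ξ ω) ∧
            Real.exp (ε ω) ≤ c * x}).toReal / (μ {ω | x < Real.exp (ε ω)}).toReal)
        atTop ≤ C * c ^ (q - α)) ∧
      Tendsto
        (fun c => Filter.limsup
          (fun x => (μ {ω | x < Real.exp (ε ω) * Real.exp (ξ ω) ∧
              Real.exp (ε ω) ≤ c * x}).toReal / (μ {ω | x < Real.exp (ε ω)}).toReal)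
          atTop)
        (𝓝[>] 0) (𝓝 0) := by
  have hreg : ∀ t > 0, Tendsto (fun x => μ.real {ω | t * x < Real.exp (ε ω)} /
      μ.real {ω | x < Real.exp (ε ω)}) atTop (𝓝 (t ^ (-α))) :=
    fun t ht => tendsto_div_of_eq_rpow_mul ht (hslow t ht) htail
  have hZq : Integrable (fun ω => Real.exp (ξ ω) ^ q) μ := by
    simpa only [← Real.exp_mul, mul_comm] using hmom
  obtain ⟨C, hC⟩ := exists_limsup_measureReal_lt_mul_and_le_div_le hεm.exp hξm.exp
    (fun ω => (Real.exp_pos _).le) (fun ω => (Real.exp_pos _).le)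
    (hindep.comp Real.measurable_exp Real.measurable_exp) hα hq hZq hreg
  exact ⟨C, fun c hc => (hC c hc).2, tendsto_nhdsGT_zero_of_le_mul_rpow (sub_pos.2 hq) hC⟩
end
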